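/- arXiv:1110.3298 — 4 statements merged into one kernel-verified Lean document; each statement's English description precedes it below -/
import Mathlib

section
/- The vector fields on the half-plane O = {(x,p) ∈ ℝ² : p < 0} given by X₁ = (1/√(-p)) ∂ₓ, X₂ = ∂ₓ, X₃ = x ∂ₓ - p ∂ₚ, X₄ = x² ∂ₓ - 2xp ∂ₚ, X₅ = (x/√(-p)) ∂ₓ + 2√(-p) ∂ₚ satisfy the commutation relations [X₁,X₃] = ½X₁, [X₁,X₄] = X₅, [X₂,X₃] = X₂, [X₂,X₄] = 2X₃, [X₂,X₅] = X₁, [X₃,X₄] = X₄, [X₃,X₅] = ½X₅, while [X₁,X₂] = [X₁,X₅] = [X₄,X₅] = 0. -/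
open Real

/-- The half-plane `O = {(x,p) : p < 0}`. -/
def O : Set (ℝ × ℝ) := {z | z.2 < 0}

/-- Lie bracket of vector fields on `ℝ²`: `[V,W] = DW·V - DV·W`. -/
noncomputable def bracket (V W : ℝ × ℝ → ℝ × ℝ) (z : ℝ × ℝ) : ℝ × ℝ :=
  fderiv ℝ W z (V z) - fderiv ℝ V z (W z)

noncomputable def X₁ : ℝ × ℝ → ℝ × ℝ := fun z => (1 / Real.sqrt (-z.2), 0)
def X₂ : ℝ × ℝ → ℝ × ℝ := fun _ => (1, 0)
def X₃ : ℝ × ℝ → ℝ × ℝ := fun z => (z.1, -z.2)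
def X₄ : ℝ × ℝ → ℝ × ℝ := fun z => (z.1 ^ 2, -2 * z.1 * z.2)
noncomputable def X₅ : ℝ × ℝ → ℝ × ℝ :=
  fun z => (z.1 / Real.sqrt (-z.2), 2 * Real.sqrt (-z.2))

noncomputable def XF : Fin 5 → (ℝ × ℝ → ℝ × ℝ) := ![X₁, X₂, X₃, X₄, X₅]

/-!
Put `s = √(-p) > 0`, so `p = -s²`. Every component of every `Xᵢ` then lies in `ℚ[x, s, s⁻¹]`, and
so do the entries of their Jacobians (`∂ₚ s = -1/(2s)`). Each bracket `DW·V - DV·W` thereby becomes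
an identity between rational functions of `x` and `s`, checked by clearing denominators.
-/

open ContinuousLinearMap

noncomputable def matrixCLM (a b c d : ℝ) : ℝ × ℝ →L[ℝ] ℝ × ℝ :=
  (a • fst ℝ ℝ ℝ + b • snd ℝ ℝ ℝ).prod (c • fst ℝ ℝ ℝ + d • snd ℝ ℝ ℝ)

@[simp]
lemma matrixCLM_apply (a b c d : ℝ) (v : ℝ × ℝ) :
    matrixCLM a b c d v = (a * v.1 + b * v.2, c * v.1 + d * v.2) := by
  simp [matrixCLM]

section

variable {z : ℝ × ℝ}

lemma hasFDerivAt_sqrt_neg_snd (hz : z.2 < 0) :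
    HasFDerivAt (fun w : ℝ × ℝ => √(-w.2)) (-(2 * √(-z.2))⁻¹ • snd ℝ ℝ ℝ) z := by
  refine (hasFDerivAt_snd.neg.sqrt (neg_ne_zero.2 hz.ne)).congr_fderiv ?_
  ext <;> simp

lemma hasFDerivAt_inv_sqrt_neg_snd (hz : z.2 < 0) :
    HasFDerivAt (fun w : ℝ × ℝ => (√(-w.2))⁻¹) ((2 * √(-z.2) ^ 3)⁻¹ • snd ℝ ℝ ℝ) z := by
  have hs : √(-z.2) ≠ 0 := (Real.sqrt_pos.2 (neg_pos.2 hz)).ne'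
  refine ((hasDerivAt_inv hs).comp_hasFDerivAt z (hasFDerivAt_sqrt_neg_snd hz)).congr_fderiv ?_
  ext <;> simp; field_simp

lemma fderiv_X₁ (hz : z.2 < 0) :
    fderiv ℝ X₁ z = matrixCLM 0 (2 * √(-z.2) ^ 3)⁻¹ 0 0 := by
  unfold X₁
  simp only [one_div]
  refine (((hasFDerivAt_inv_sqrt_neg_snd hz).prodMk
    (hasFDerivAt_const (0 : ℝ) z)).congr_fderiv ?_).fderiv
  ext <;> simp

lemma fderiv_X₂ : fderiv ℝ X₂ z = matrixCLM 0 0 0 0 := by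
  refine ((hasFDerivAt_const _ z).congr_fderiv ?_).fderiv
  ext <;> simp

lemma fderiv_X₃ : fderiv ℝ X₃ z = matrixCLM 1 0 0 (-1) := by
  refine ((hasFDerivAt_fst.prodMk hasFDerivAt_snd.neg).congr_fderiv ?_).fderiv
  ext <;> simp

lemma fderiv_X₄ : fderiv ℝ X₄ z = matrixCLM (2 * z.1) 0 (-2 * z.2) (-2 * z.1) := by
  refine (((hasFDerivAt_fst.pow 2).prodMk
    ((hasFDerivAt_fst.const_mul (-2)).mul hasFDerivAt_snd)).congr_fderiv ?_).fderiv
  ext <;> simp; ring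

lemma fderiv_X₅ (hz : z.2 < 0) :
    fderiv ℝ X₅ z = matrixCLM (√(-z.2))⁻¹ (z.1 / (2 * √(-z.2) ^ 3)) 0 (-(√(-z.2))⁻¹) := by
  have hs : √(-z.2) ≠ 0 := (Real.sqrt_pos.2 (neg_pos.2 hz)).ne'
  refine (((hasFDerivAt_fst.mul (hasFDerivAt_inv_sqrt_neg_snd hz)).prodMk
    ((hasFDerivAt_sqrt_neg_snd hz).const_mul 2)).congr_fderiv ?_).fderiv
  ext <;> simp <;> field_simp

lemma exists_eq_neg_sq_of_mem_O (hz : z ∈ O) : ∃ x s : ℝ, 0 < s ∧ z = (x, -s ^ 2) :=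
  ⟨z.1, √(-z.2), Real.sqrt_pos.2 (neg_pos.2 hz), by
    ext
    · rfl
    · simp [Real.sq_sqrt (neg_nonneg.2 hz.le)]⟩

end

/-- the commutation relations of `X₁,…,X₅` on `O = {p < 0}`. -/
theorem commutation_relations : ∀ z ∈ O,
    bracket X₁ X₃ z = (1/2 : ℝ) • X₁ z ∧
    bracket X₁ X₄ z = X₅ z ∧
    bracket X₂ X₃ z = X₂ z ∧
    bracket X₂ X₄ z = (2 : ℝ) • X₃ z ∧
    bracket X₂ X₅ z = X₁ z ∧
    bracket X₃ X₄ z = X₄ z ∧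
    bracket X₃ X₅ z = (1/2 : ℝ) • X₅ z ∧
    bracket X₁ X₂ z = 0 ∧
    bracket X₁ X₅ z = 0 ∧
    bracket X₄ X₅ z = 0 := by
  intro z hz
  simp only [bracket, fderiv_X₁ hz, fderiv_X₂, fderiv_X₃, fderiv_X₄, fderiv_X₅ hz]
  obtain ⟨x, s, hs, rfl⟩ := exists_eq_neg_sq_of_mem_O hz
  have hsqrt : √(-(-s ^ 2)) = s := by rw [neg_neg, Real.sqrt_sq hs.le]
  simp only [X₁, X₂, X₃, X₄, X₅, hsqrt, matrixCLM_apply, Prod.ext_iff, Prod.fst_sub,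
    Prod.snd_sub, Prod.smul_fst, Prod.smul_snd, Prod.fst_zero, Prod.snd_zero, smul_eq_mul]
  and_intros <;> field_simp <;> ring
end

section
/- The 5-dimensional Lie algebra V spanned by X₁,...,X₅ decomposes as a semidirect sum V = V₁ ⊕ₛ V₂, where V₁ = span{X₁,X₅} is the radical (a 2-dimensional abelian ideal) and V₂ = span{X₂,X₃,X₄} is a subalgebra isomorphic to sl(2,ℝ); in particular [V₂,V₁] ⊆ V₁ and V₁ ∩ V₂ = 0. -/
open Real

noncomputable def Y₂ (c : Fin 3 → ℝ) : ℝ × ℝ → ℝ × ℝ :=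
  fun z => c 0 • X₂ z + c 1 • X₃ z + c 2 • X₄ z

/-!
In the coordinate `s = √(-p)` all five fields are rational in `x` and `s`, so every bracket is
computed from explicit Jacobians. The fields `X₂, X₃, X₄` satisfy `[X₂,X₃] = X₂`,
`[X₂,X₄] = 2X₃`, `[X₃,X₄] = X₄`, the relations of `E, -H/2, -F` in `sl(2,ℝ)`; `X₁` and `X₅`
commute, and bracketing with any `Xᵢ` keeps their span. A relation `a X₁ + b X₅ = Y` with `Y` in
the span of `X₂, X₃, X₄`, evaluated at `(0,-1)`, `(0,-4)` and `(1,-1)`, forces all coefficients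
to vanish.
-/

open LieAlgebra.SpecialLinear

noncomputable def jac (a b c d : ℝ) : (ℝ × ℝ) →L[ℝ] ℝ × ℝ :=
  (a • ContinuousLinearMap.fst ℝ ℝ ℝ + b • ContinuousLinearMap.snd ℝ ℝ ℝ).prod
    (c • ContinuousLinearMap.fst ℝ ℝ ℝ + d • ContinuousLinearMap.snd ℝ ℝ ℝ)

@[simp] lemma jac_apply (a b c d : ℝ) (w : ℝ × ℝ) :
    jac a b c d w = (a * w.1 + b * w.2, c * w.1 + d * w.2) := rfl

lemma bracket_eq_of_hasFDerivAt {V W : ℝ × ℝ → ℝ × ℝ} {V' W' : (ℝ × ℝ) →L[ℝ] ℝ × ℝ}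
    {z : ℝ × ℝ} (hV : HasFDerivAt V V' z) (hW : HasFDerivAt W W' z) :
    bracket V W z = W' (V z) - V' (W z) := by
  rw [bracket, hV.fderiv, hW.fderiv]

lemma bracket_swap (V W : ℝ × ℝ → ℝ × ℝ) (z : ℝ × ℝ) : bracket V W z = -bracket W V z :=
  (neg_sub _ _).symm

lemma bracket_self (V : ℝ × ℝ → ℝ × ℝ) (z : ℝ × ℝ) : bracket V V z = 0 := sub_self _

lemma hasDerivAt_sqrt_neg {p : ℝ} (hp : p < 0) :
    HasDerivAt (fun q => √(-q)) (-1 / (2 * √(-p))) p := by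
  simpa [div_eq_mul_inv] using ((hasDerivAt_id p).neg).sqrt (by simpa using hp.ne)

lemma hasDerivAt_one_div_sqrt_neg {p : ℝ} (hp : p < 0) :
    HasDerivAt (fun q => 1 / √(-q)) (1 / (2 * √(-p) ^ 3)) p := by
  have hs : √(-p) ≠ 0 := (Real.sqrt_pos.2 (neg_pos.2 hp)).ne'
  simpa only [one_div, Pi.inv_def] using
    ((hasDerivAt_sqrt_neg hp).inv hs).congr_deriv (by field_simp)

section Jacobians

variable {z : ℝ × ℝ}

lemma hasFDerivAt_X₁ (hz : z ∈ O) : HasFDerivAt X₁ (jac 0 (1 / (2 * √(-z.2) ^ 3)) 0 0) z := by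
  refine (((hasDerivAt_one_div_sqrt_neg hz).comp_hasFDerivAt z hasFDerivAt_snd).prodMk
    (hasFDerivAt_const (0 : ℝ) z)).congr_fderiv ?_
  ext <;> simp

lemma hasFDerivAt_X₂ : HasFDerivAt X₂ (jac 0 0 0 0) z :=
  (hasFDerivAt_const _ z).congr_fderiv (by ext <;> simp)

lemma hasFDerivAt_X₃ : HasFDerivAt X₃ (jac 1 0 0 (-1)) z := by
  have hX₃ : X₃ = jac 1 0 0 (-1) := by ext w <;> simp [X₃]
  exact hX₃ ▸ (jac 1 0 0 (-1)).hasFDerivAt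

lemma hasFDerivAt_X₄ : HasFDerivAt X₄ (jac (2 * z.1) 0 (-2 * z.2) (-2 * z.1)) z := by
  refine ((hasFDerivAt_fst.pow 2).prodMk
    ((hasFDerivAt_fst.const_mul (-2)).mul hasFDerivAt_snd)).congr_fderiv ?_
  ext <;> simp; ring

lemma hasFDerivAt_X₅ (hz : z ∈ O) :
    HasFDerivAt X₅ (jac (1 / √(-z.2)) (z.1 / (2 * √(-z.2) ^ 3)) 0 (-1 / √(-z.2))) z := by
  have hsnd : HasFDerivAt (fun w : ℝ × ℝ => w.2) (ContinuousLinearMap.snd ℝ ℝ ℝ) z :=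
    hasFDerivAt_snd
  have h := (hasFDerivAt_fst.mul ((hasDerivAt_one_div_sqrt_neg hz).comp_hasFDerivAt z hsnd)).prodMk
    (((hasDerivAt_sqrt_neg hz).comp_hasFDerivAt z hsnd).const_mul 2)
  simp only [Function.comp_def, Pi.mul_apply, mul_one_div] at h
  refine h.congr_fderiv ?_
  ext <;> simp <;> field_simp

lemma hasFDerivAt_Y₂ (c : Fin 3 → ℝ) : HasFDerivAt (Y₂ c)
    (jac (c 1 + 2 * c 2 * z.1) 0 (-2 * c 2 * z.2) (-c 1 - 2 * c 2 * z.1)) z := by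
  refine (((hasFDerivAt_X₂.const_smul (c 0)).add (hasFDerivAt_X₃.const_smul (c 1))).add
    (hasFDerivAt_X₄.const_smul (c 2))).congr_fderiv ?_
  ext <;> simp <;> ring

end Jacobians

section Brackets

variable {z : ℝ × ℝ}

lemma sq_sqrt_neg_snd (hz : z ∈ O) : √(-z.2) ^ 2 = -z.2 :=
  Real.sq_sqrt (neg_nonneg.2 hz.le)

lemma sqrt_neg_snd_pos (hz : z ∈ O) : 0 < √(-z.2) := Real.sqrt_pos.2 (neg_pos.2 hz)

lemma bracket_X₁_X₅ (hz : z ∈ O) : bracket X₁ X₅ z = 0 := by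
  rw [bracket_eq_of_hasFDerivAt (hasFDerivAt_X₁ hz) (hasFDerivAt_X₅ hz)]
  have hs := sqrt_neg_snd_pos hz
  ext <;> simp [X₁, X₅]; field_simp; rw [sq_sqrt_neg_snd hz]; ring

lemma bracket_X₂_X₁ (hz : z ∈ O) : bracket X₂ X₁ z = 0 := by
  rw [bracket_eq_of_hasFDerivAt hasFDerivAt_X₂ (hasFDerivAt_X₁ hz)]
  ext <;> simp [X₁, X₂]

lemma bracket_X₃_X₁ (hz : z ∈ O) : bracket X₃ X₁ z = (-1 / 2 : ℝ) • X₁ z := by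
  rw [bracket_eq_of_hasFDerivAt hasFDerivAt_X₃ (hasFDerivAt_X₁ hz)]
  have hs := sqrt_neg_snd_pos hz
  ext <;> simp [X₁, X₃]; field_simp; rw [sq_sqrt_neg_snd hz]; ring

lemma bracket_X₄_X₁ (hz : z ∈ O) : bracket X₄ X₁ z = -X₅ z := by
  rw [bracket_eq_of_hasFDerivAt hasFDerivAt_X₄ (hasFDerivAt_X₁ hz)]
  have hs := sqrt_neg_snd_pos hz
  ext <;> simp [X₁, X₄, X₅] <;> field_simp <;> rw [sq_sqrt_neg_snd hz] <;> ring

lemma bracket_X₂_X₅ (hz : z ∈ O) : bracket X₂ X₅ z = X₁ z := by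
  rw [bracket_eq_of_hasFDerivAt hasFDerivAt_X₂ (hasFDerivAt_X₅ hz)]
  ext <;> simp [X₁, X₂]

lemma bracket_X₃_X₅ (hz : z ∈ O) : bracket X₃ X₅ z = (1 / 2 : ℝ) • X₅ z := by
  rw [bracket_eq_of_hasFDerivAt hasFDerivAt_X₃ (hasFDerivAt_X₅ hz)]
  have hs := sqrt_neg_snd_pos hz
  ext <;> simp [X₃, X₅] <;> field_simp <;> rw [sq_sqrt_neg_snd hz] <;> ring

lemma bracket_X₄_X₅ (hz : z ∈ O) : bracket X₄ X₅ z = 0 := by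
  rw [bracket_eq_of_hasFDerivAt hasFDerivAt_X₄ (hasFDerivAt_X₅ hz)]
  have hs := sqrt_neg_snd_pos hz
  ext <;> simp [X₄, X₅] <;> field_simp <;> rw [sq_sqrt_neg_snd hz] <;> ring

end Brackets

lemma exists_bracket_XF_X₁_eq (i : Fin 5) :
    ∃ a b : ℝ, ∀ z ∈ O, bracket (XF i) X₁ z = a • X₁ z + b • X₅ z := by
  fin_cases i
  · exact ⟨0, 0, fun z _ => by simp [XF, bracket_self]⟩
  · exact ⟨0, 0, fun z hz => by simp [XF, bracket_X₂_X₁ hz]⟩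
  · exact ⟨-1 / 2, 0, fun z hz => by simp [XF, bracket_X₃_X₁ hz]⟩
  · exact ⟨0, -1, fun z hz => by simp [XF, bracket_X₄_X₁ hz]⟩
  · exact ⟨0, 0, fun z hz => by simp [XF, bracket_swap X₅, bracket_X₁_X₅ hz]⟩

lemma exists_bracket_XF_X₅_eq (i : Fin 5) :
    ∃ a b : ℝ, ∀ z ∈ O, bracket (XF i) X₅ z = a • X₁ z + b • X₅ z := by
  fin_cases i
  · exact ⟨0, 0, fun z hz => by simp [XF, bracket_X₁_X₅ hz]⟩
  · exact ⟨1, 0, fun z hz => by simp [XF, bracket_X₂_X₅ hz]⟩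
  · exact ⟨0, 1 / 2, fun z hz => by simp [XF, bracket_X₃_X₅ hz]⟩
  · exact ⟨0, 0, fun z hz => by simp [XF, bracket_X₄_X₅ hz]⟩
  · exact ⟨0, 0, fun z _ => by simp [XF, bracket_self]⟩

/-- The coefficients of `[Y₂ c, Y₂ d]`, from `[X₂,X₃] = X₂`, `[X₂,X₄] = 2X₃`, `[X₃,X₄] = X₄`. -/
def bracketCoeffs (c d : Fin 3 → ℝ) : Fin 3 → ℝ :=
  ![c 0 * d 1 - c 1 * d 0, 2 * (c 0 * d 2 - c 2 * d 0), c 1 * d 2 - c 2 * d 1]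

lemma bracket_Y₂ (c d : Fin 3 → ℝ) (z : ℝ × ℝ) :
    bracket (Y₂ c) (Y₂ d) z = Y₂ (bracketCoeffs c d) z := by
  rw [bracket_eq_of_hasFDerivAt (hasFDerivAt_Y₂ c) (hasFDerivAt_Y₂ d)]
  ext <;> simp [Y₂, X₂, X₃, X₄, bracketCoeffs] <;> ring

lemma sl_two_apply_one_one {R : Type*} [CommRing R] (A : sl (Fin 2) R) :
    (A : Matrix (Fin 2) (Fin 2) R) 1 1 = -(A : Matrix (Fin 2) (Fin 2) R) 0 0 := by
  have h : Matrix.trace (A : Matrix (Fin 2) (Fin 2) R) = 0 := A.2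
  rw [Matrix.trace_fin_two] at h
  exact eq_neg_of_add_eq_zero_right h

/-- Coordinates with respect to `E, -H/2, -F`, the matrices corresponding to `X₂, X₃, X₄`. -/
noncomputable def slCoeffs : sl (Fin 2) ℝ ≃ₗ[ℝ] (Fin 3 → ℝ) where
  toFun A := ![A.1 0 1, -2 * A.1 0 0, -A.1 1 0]
  map_add' A B := by ext i; fin_cases i <;> simp <;> ring
  map_smul' r A := by ext i; fin_cases i <;> simp; ring
  invFun c := ⟨!![-c 1 / 2, c 0; -c 2, c 1 / 2],
    LinearMap.mem_ker.2 (by simp [Matrix.trace_fin_two, neg_div])⟩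
  left_inv A := by
    ext i j; fin_cases i <;> fin_cases j <;> simp [sl_two_apply_one_one]; ring
  right_inv c := by ext i; fin_cases i <;> simp; ring

lemma slCoeffs_lie (A B : sl (Fin 2) ℝ) :
    slCoeffs ⁅A, B⁆ = bracketCoeffs (slCoeffs A) (slCoeffs B) := by
  ext i
  fin_cases i <;>
    simp [slCoeffs, bracketCoeffs, Ring.lie_def, Matrix.mul_apply, sl_two_apply_one_one] <;> ring

lemma eq_zero_of_smul_X₁_add_smul_X₅_eq_Y₂ {a b : ℝ} {c : Fin 3 → ℝ}
    (h : ∀ z ∈ O, a • X₁ z + b • X₅ z = Y₂ c z) : a = 0 ∧ b = 0 ∧ c = 0 := by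
  have h₁ := h (0, -1) (by norm_num [O])
  have h₂ := h (0, -4) (by norm_num [O])
  have h₃ := h (1, -1) (by norm_num [O])
  norm_num [X₁, X₂, X₃, X₄, X₅, Y₂, Prod.ext_iff] at h₁ h₂ h₃
  have ha : a = 0 := by linarith
  have hb : b = 0 := by linarith
  refine ⟨ha, hb, ?_⟩
  ext i
  fin_cases i <;> simp <;> linarith

/-- `V = V₁ ⊕ₛ V₂`: `V₁ = span{X₁,X₅}` is a 2-dimensional abelian
ideal (the radical), `V₂ = span{X₂,X₃,X₄}` is a subalgebra isomorphic to
`sl(2,ℝ)`, `[V₂,V₁] ⊆ V₁` and `V₁ ∩ V₂ = 0`. -/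
theorem levi_decomposition :
    (∀ z ∈ O, bracket X₁ X₅ z = 0) ∧
    (∀ a b : ℝ, (∀ z ∈ O, a • X₁ z + b • X₅ z = 0) → a = 0 ∧ b = 0) ∧
    (∀ i : Fin 5, ∀ j : Fin 5, j = 0 ∨ j = 4 →
      ∃ a b : ℝ, ∀ z ∈ O, bracket (XF i) (XF j) z = a • X₁ z + b • X₅ z) ∧
    (∀ c d : Fin 3 → ℝ, ∃ e : Fin 3 → ℝ, ∀ z ∈ O,
      bracket (Y₂ c) (Y₂ d) z = Y₂ e z) ∧
    (∃ φ : (LieAlgebra.SpecialLinear.sl (Fin 2) ℝ) ≃ₗ[ℝ] (Fin 3 → ℝ),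
      ∀ A B : LieAlgebra.SpecialLinear.sl (Fin 2) ℝ, ∀ z ∈ O,
        bracket (Y₂ (φ A)) (Y₂ (φ B)) z = Y₂ (φ ⁅A, B⁆) z) ∧
    (∀ a b : ℝ, ∀ c : Fin 3 → ℝ,
      (∀ z ∈ O, a • X₁ z + b • X₅ z = Y₂ c z) →
        a = 0 ∧ b = 0 ∧ c = 0) := by
  refine ⟨fun _ => bracket_X₁_X₅, fun a b h => ?_, ?_,
    fun c d => ⟨_, fun z _ => bracket_Y₂ c d z⟩,
    ⟨slCoeffs, fun A B z _ => by rw [bracket_Y₂, slCoeffs_lie]⟩,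
    fun a b c h => eq_zero_of_smul_X₁_add_smul_X₅_eq_Y₂ h⟩
  · obtain ⟨ha, hb, -⟩ := eq_zero_of_smul_X₁_add_smul_X₅_eq_Y₂ (c := 0)
      fun z hz => by simpa [Y₂] using h z hz
    exact ⟨ha, hb⟩
  · rintro i j (rfl | rfl)
    exacts [exists_bracket_XF_X₁_eq i, exists_bracket_XF_X₅_eq i]
end

section
/- The fundamental vector field of the one-parameter subgroup λ₁ ↦ ((λ₁,0), I) of the action Φ (i.e., the derivative at λ₁ = 0 of λ₁ ↦ Φ(((λ₁,0),I),(x,p))) equals -(1/√(-p)) ∂ₓ, and the fundamental vector field of λ₅ ↦ ((0,λ₅), I) equals -((x/√(-p)) ∂ₓ + 2√(-p) ∂ₚ); i.e., up to sign these are X₁ and X₅. -/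
/-- The action of the `ℝ²` factor on `O = {p < 0}`. -/
noncomputable def PhiR2 (lam₁ lam₅ : ℝ) (z : ℝ × ℝ) : ℝ × ℝ :=
  ((Real.sqrt (-z.2) * z.1 - lam₁) / (Real.sqrt (-z.2) + lam₅),
    -(Real.sqrt (-z.2) + lam₅) ^ 2)

theorem hasDerivAt_PhiR2_lam₁ (lam₁ lam₅ : ℝ) (z : ℝ × ℝ) :
    HasDerivAt (fun s : ℝ => PhiR2 s lam₅ z)
      ((-(1 / (Real.sqrt (-z.2) + lam₅)), 0) : ℝ × ℝ) lam₁ := by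
  set r := Real.sqrt (-z.2)
  have hfst : HasDerivAt (fun s : ℝ => (r * z.1 - s) / (r + lam₅)) (-(1 / (r + lam₅))) lam₁ :=
    (((hasDerivAt_id' lam₁).const_sub _).div_const _).congr_deriv (by ring)
  exact hfst.prodMk (hasDerivAt_const _ _)

theorem hasDerivAt_PhiR2_lam₅ (lam₁ lam₅ : ℝ) (z : ℝ × ℝ) (h : Real.sqrt (-z.2) + lam₅ ≠ 0) :
    HasDerivAt (fun s : ℝ => PhiR2 lam₁ s z)
      ((-((Real.sqrt (-z.2) * z.1 - lam₁) / (Real.sqrt (-z.2) + lam₅) ^ 2),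
        -(2 * (Real.sqrt (-z.2) + lam₅))) : ℝ × ℝ) lam₅ := by
  set r := Real.sqrt (-z.2)
  have hden : HasDerivAt (fun s : ℝ => r + s) 1 lam₅ := (hasDerivAt_id' lam₅).const_add r
  have hfst : HasDerivAt (fun s : ℝ => (r * z.1 - lam₁) / (r + s))
      (-((r * z.1 - lam₁) / (r + lam₅) ^ 2)) lam₅ :=
    ((hasDerivAt_const lam₅ (r * z.1 - lam₁)).fun_div hden h).congr_deriv (by ring)
  have hsnd : HasDerivAt (fun s : ℝ => -(r + s) ^ 2) (-(2 * (r + lam₅))) lam₅ :=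
    (hden.fun_pow 2).fun_neg.congr_deriv (by ring)
  exact hfst.prodMk hsnd

/-- the fundamental vector fields of the one-parameter subgroups
`λ₁ ↦ ((λ₁,0),I)` and `λ₅ ↦ ((0,λ₅),I)` are `-X₁ = -(1/√(-p))∂ₓ` and
`-X₅ = -((x/√(-p))∂ₓ + 2√(-p)∂ₚ)`, respectively. -/
theorem fundamental_vector_fields (x p : ℝ) (hp : p < 0) :
    HasDerivAt (fun s : ℝ => PhiR2 s 0 (x, p))
      ((-(1 / Real.sqrt (-p)), 0) : ℝ × ℝ) 0 ∧
    HasDerivAt (fun s : ℝ => PhiR2 0 s (x, p))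
      ((-(x / Real.sqrt (-p)), -(2 * Real.sqrt (-p))) : ℝ × ℝ) 0 := by
  have hr : Real.sqrt (-p) ≠ 0 := (Real.sqrt_pos.mpr (neg_pos.mpr hp)).ne'
  refine ⟨by simpa using hasDerivAt_PhiR2_lam₁ 0 0 (x, p), ?_⟩
  convert hasDerivAt_PhiR2_lam₅ 0 0 (x, p) (by simpa using hr) using 1
  simp only [sub_zero, add_zero, Prod.mk.injEq, and_true]
  field_simp
end

section
/- For three points (xᵢ,pᵢ) ∈ O = {p < 0}, i = 1,2,3, the function F₀ = (x₂-x₃)√(p₂p₃) + (x₃-x₁)√(p₃p₁) + (x₁-x₂)√(p₁p₂) is invariant under the simultaneous SL(2,ℝ) action (xᵢ,pᵢ) ↦ ((αxᵢ+β)/(γxᵢ+δ), pᵢ(γxᵢ+δ)²) with αδ-βγ = 1, whenever γxᵢ+δ > 0 for all i. -/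
/-! The Möbius map `x ↦ (αx+β)/(γx+δ)` scales differences by `1/((γx+δ)(γy+δ))`, while
`p ↦ p(γx+δ)²` scales `√(-p)` by `γx+δ`; in each term `(xᵢ-xⱼ)√(-pᵢ)√(-pⱼ)` of `F₀`
the two factors cancel. -/

lemma mobius_sub_mobius {α β γ δ : ℝ} (hdet : α * δ - β * γ = 1) {x y : ℝ}
    (hx : γ * x + δ ≠ 0) (hy : γ * y + δ ≠ 0) :
    (α * x + β) / (γ * x + δ) - (α * y + β) / (γ * y + δ)
      = (x - y) / ((γ * x + δ) * (γ * y + δ)) := by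
  rw [div_sub_div _ _ hx hy]
  congr 1
  linear_combination (x - y) * hdet

lemma Real.sqrt_neg_mul_sq (p : ℝ) {d : ℝ} (hd : 0 ≤ d) :
    √(-(p * d ^ 2)) = √(-p) * d := by
  rw [← neg_mul, Real.sqrt_mul' _ (sq_nonneg d), Real.sqrt_sq hd]

lemma mobius_sub_mul_sqrt_neg_mul_sqrt_neg {α β γ δ : ℝ} (hdet : α * δ - β * γ = 1)
    {x y : ℝ} (hx : 0 < γ * x + δ) (hy : 0 < γ * y + δ) (p q : ℝ) :
    ((α * x + β) / (γ * x + δ) - (α * y + β) / (γ * y + δ)) *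
        (√(-(p * (γ * x + δ) ^ 2)) * √(-(q * (γ * y + δ) ^ 2)))
      = (x - y) * (√(-p) * √(-q)) := by
  rw [mobius_sub_mobius hdet hx.ne' hy.ne', Real.sqrt_neg_mul_sq p hx.le,
    Real.sqrt_neg_mul_sq q hy.le, div_mul_eq_mul_div, div_eq_iff (mul_pos hx hy).ne']
  ring

theorem F0_sl2_invariant_general (α β γ δ : ℝ) (hdet : α * δ - β * γ = 1)
    (x₁ p₁ x₂ p₂ x₃ p₃ : ℝ)
    (d₁ : γ * x₁ + δ > 0) (d₂ : γ * x₂ + δ > 0) (d₃ : γ * x₃ + δ > 0) :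
    (letI x₁' := (α * x₁ + β) / (γ * x₁ + δ); letI p₁' := p₁ * (γ * x₁ + δ) ^ 2
     letI x₂' := (α * x₂ + β) / (γ * x₂ + δ); letI p₂' := p₂ * (γ * x₂ + δ) ^ 2
     letI x₃' := (α * x₃ + β) / (γ * x₃ + δ); letI p₃' := p₃ * (γ * x₃ + δ) ^ 2
     (x₂' - x₃') * (Real.sqrt (-p₂') * Real.sqrt (-p₃')) +
     (x₃' - x₁') * (Real.sqrt (-p₃') * Real.sqrt (-p₁')) +
     (x₁' - x₂') * (Real.sqrt (-p₁') * Real.sqrt (-p₂'))) =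
    (x₂ - x₃) * (Real.sqrt (-p₂) * Real.sqrt (-p₃)) +
    (x₃ - x₁) * (Real.sqrt (-p₃) * Real.sqrt (-p₁)) +
    (x₁ - x₂) * (Real.sqrt (-p₁) * Real.sqrt (-p₂)) := by
  show _ = _
  rw [mobius_sub_mul_sqrt_neg_mul_sqrt_neg hdet d₂ d₃,
    mobius_sub_mul_sqrt_neg_mul_sqrt_neg hdet d₃ d₁,
    mobius_sub_mul_sqrt_neg_mul_sqrt_neg hdet d₁ d₂]

/-- `F₀` is invariant under the simultaneous `SL(2,ℝ)` action
`(xᵢ,pᵢ) ↦ ((αxᵢ+β)/(γxᵢ+δ), pᵢ(γxᵢ+δ)²)` with `αδ-βγ = 1` and `γxᵢ+δ > 0`. -/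
theorem F0_sl2_invariant (α β γ δ : ℝ) (hdet : α * δ - β * γ = 1)
    (x₁ p₁ x₂ p₂ x₃ p₃ : ℝ)
    (h₁ : p₁ < 0) (h₂ : p₂ < 0) (h₃ : p₃ < 0)
    (d₁ : γ * x₁ + δ > 0) (d₂ : γ * x₂ + δ > 0) (d₃ : γ * x₃ + δ > 0) :
    (letI x₁' := (α * x₁ + β) / (γ * x₁ + δ); letI p₁' := p₁ * (γ * x₁ + δ) ^ 2
     letI x₂' := (α * x₂ + β) / (γ * x₂ + δ); letI p₂' := p₂ * (γ * x₂ + δ) ^ 2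
     letI x₃' := (α * x₃ + β) / (γ * x₃ + δ); letI p₃' := p₃ * (γ * x₃ + δ) ^ 2
     (x₂' - x₃') * (Real.sqrt (-p₂') * Real.sqrt (-p₃')) +
     (x₃' - x₁') * (Real.sqrt (-p₃') * Real.sqrt (-p₁')) +
     (x₁' - x₂') * (Real.sqrt (-p₁') * Real.sqrt (-p₂'))) =
    (x₂ - x₃) * (Real.sqrt (-p₂) * Real.sqrt (-p₃)) +
    (x₃ - x₁) * (Real.sqrt (-p₃) * Real.sqrt (-p₁)) +
    (x₁ - x₂) * (Real.sqrt (-p₁) * Real.sqrt (-p₂)) :=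
  F0_sl2_invariant_general α β γ δ hdet x₁ p₁ x₂ p₂ x₃ p₃ d₁ d₂ d₃
end
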